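/- Let λ, ν ∈ ℂ, N ∈ ℕ and p ∈ ℤ with p ≥ N. Then the map Φ restricts to a ℂ-linear isomorphism from Sol(λ,ν;N,p) onto Sol(λ,ν;N,−p). -/

import Mathlib

noncomputable section

/-- The operator `M_s` (the F-system equation for `C₁⁺`), acting on a `ℤ`-indexed
tuple of polynomials in `ℂ[ζ₁,ζ₂,ζ₃]`. -/
def Mop (lam : ℂ) (N : ℕ) (φ : ℤ → MvPolynomial (Fin 3) ℂ) (s : ℤ) :
    MvPolynomial (Fin 3) ℂ :=
  MvPolynomial.C (2 * lam) * MvPolynomial.pderiv 0 (φ s)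
    + 2 * (MvPolynomial.X 0 * MvPolynomial.pderiv 0 (MvPolynomial.pderiv 0 (φ s))
        + MvPolynomial.X 1 * MvPolynomial.pderiv 1 (MvPolynomial.pderiv 0 (φ s))
        + MvPolynomial.X 2 * MvPolynomial.pderiv 2 (MvPolynomial.pderiv 0 (φ s)))
    - MvPolynomial.X 0 * (MvPolynomial.pderiv 0 (MvPolynomial.pderiv 0 (φ s))
        + MvPolynomial.pderiv 1 (MvPolynomial.pderiv 1 (φ s))
        + MvPolynomial.pderiv 2 (MvPolynomial.pderiv 2 (φ s)))
    - MvPolynomial.C ((s : ℂ)) * MvPolynomial.pderiv 2 (φ (s - 1))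
    + MvPolynomial.C (2 * Complex.I * ((s : ℂ) - (N : ℂ))) * MvPolynomial.pderiv 1 (φ s)
    + MvPolynomial.C (2 * (N : ℂ) - (s : ℂ)) * MvPolynomial.pderiv 2 (φ (s + 1))

/-- Substitution `ζ ↦ e^{-t} ζ` on `ℂ[ζ₁,ζ₂,ζ₃]`. -/
def scaleSub (t : ℝ) (p : MvPolynomial (Fin 3) ℂ) : MvPolynomial (Fin 3) ℂ :=
  MvPolynomial.aeval
    (fun i : Fin 3 => MvPolynomial.C (Complex.exp (-(t : ℂ))) * MvPolynomial.X i) p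

/-- Substitution `(ζ₁,ζ₂,ζ₃) ↦ (cos θ ζ₁ + sin θ ζ₂, -sin θ ζ₁ + cos θ ζ₂, ζ₃)`. -/
def rotSub (θ : ℝ) (p : MvPolynomial (Fin 3) ℂ) : MvPolynomial (Fin 3) ℂ :=
  MvPolynomial.aeval
    ![MvPolynomial.C ((Real.cos θ : ℂ)) * MvPolynomial.X 0 +
        MvPolynomial.C ((Real.sin θ : ℂ)) * MvPolynomial.X 1,
      MvPolynomial.C (-(Real.sin θ : ℂ)) * MvPolynomial.X 0 +
        MvPolynomial.C ((Real.cos θ : ℂ)) * MvPolynomial.X 1,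
      MvPolynomial.X 2] p

/-- The space `Sol(λ,ν;N,m)`: tuples `(ψ_j)_{j=0}^{2N}` (indexed by `ℤ`, vanishing
outside `0,…,2N`) satisfying the scaling, rotation and F-system conditions. -/
def Sol (lam nu : ℂ) (N : ℕ) (m : ℤ) : Submodule ℂ (ℤ → MvPolynomial (Fin 3) ℂ) where
  carrier := {ψ |
    (∀ j : ℤ, j < 0 ∨ 2 * (N : ℤ) < j → ψ j = 0) ∧
    (∀ j : ℤ, 0 ≤ j → j ≤ 2 * (N : ℤ) → ∀ t : ℝ,
      Complex.exp (lam * (t : ℂ)) • ψ j = Complex.exp (nu * (t : ℂ)) • scaleSub t (ψ j)) ∧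
    (∀ j : ℤ, 0 ≤ j → j ≤ 2 * (N : ℤ) → ∀ θ : ℝ,
      Complex.exp (Complex.I * ((N : ℂ) - (j : ℂ)) * (θ : ℂ)) • ψ j =
        Complex.exp (Complex.I * (m : ℂ) * (θ : ℂ)) • rotSub θ (ψ j)) ∧
    (∀ s : ℤ, 0 ≤ s → s ≤ 2 * (N : ℤ) → Mop lam N ψ s = 0)}
  zero_mem' := by
    refine ⟨fun j _ => rfl, fun j _ _ t => ?_, fun j _ _ θ => ?_, fun s _ _ => ?_⟩
    · simp [scaleSub]
    · simp [rotSub]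
    · simp [Mop]
  add_mem' := by
    rintro ψ φ ⟨hs, hsc, hrot, hM⟩ ⟨hs', hsc', hrot', hM'⟩
    refine ⟨fun j hj => ?_, fun j hj hj' t => ?_, fun j hj hj' θ => ?_, fun s h1 h2 => ?_⟩
    · show ψ j + φ j = 0
      rw [hs j hj, hs' j hj, add_zero]
    · have h := hsc j hj hj' t
      have h' := hsc' j hj hj' t
      simp only [Pi.add_apply, smul_add, h, h', scaleSub, map_add]
    · have h := hrot j hj hj' θ
      have h' := hrot' j hj hj' θ
      simp only [Pi.add_apply, smul_add, h, h', rotSub, map_add]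
    · have hadd : Mop lam N (ψ + φ) s = Mop lam N ψ s + Mop lam N φ s := by
        simp only [Mop, Pi.add_apply, map_add]
        ring
      rw [hadd, hM s h1 h2, hM' s h1 h2, add_zero]
  smul_mem' := by
    rintro c ψ ⟨hs, hsc, hrot, hM⟩
    refine ⟨fun j hj => ?_, fun j hj hj' t => ?_, fun j hj hj' θ => ?_, fun s h1 h2 => ?_⟩
    · show c • ψ j = 0
      rw [hs j hj, smul_zero]
    · have h := hsc j hj hj' t
      simp only [Pi.smul_apply]
      rw [smul_comm, h, smul_comm]
      congr 1
      simp [scaleSub]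
    · have h := hrot j hj hj' θ
      simp only [Pi.smul_apply]
      rw [smul_comm, h, smul_comm]
      congr 1
      simp [rotSub]
    · have hsm : Mop lam N (c • ψ) s = c • Mop lam N ψ s := by
        simp only [Mop, Pi.smul_apply, MvPolynomial.smul_eq_C_mul,
          MvPolynomial.pderiv_C_mul]
        ring
      rw [hsm, hM s h1 h2, smul_zero]

/-- Substitution `ζ₂ ↦ -ζ₂`. -/
def negSub (p : MvPolynomial (Fin 3) ℂ) : MvPolynomial (Fin 3) ℂ :=
  MvPolynomial.aeval ![MvPolynomial.X 0, -MvPolynomial.X 1, MvPolynomial.X 2] p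

/-- The linear map `Φ`, `Φ(φ)_s = (-1)^s · φ_{2N-s}(ζ₁,-ζ₂,ζ₃)`. -/
def PhiLin (N : ℕ) : (ℤ → MvPolynomial (Fin 3) ℂ) →ₗ[ℂ] (ℤ → MvPolynomial (Fin 3) ℂ) where
  toFun φ := fun s => ((-1 : ℂ) ^ s) • negSub (φ (2 * (N : ℤ) - s))
  map_add' := by
    intro ψ φ
    funext s
    simp [negSub, map_add, smul_add]
  map_smul' := by
    intro c φ
    funext s
    simp only [Pi.smul_apply, RingHom.id_apply, negSub, map_smul]
    rw [smul_comm]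

/- ### Auxiliary lemmas -/

open MvPolynomial in
lemma aeval_aeval3 (f g : Fin 3 → MvPolynomial (Fin 3) ℂ) (q : MvPolynomial (Fin 3) ℂ) :
    aeval f (aeval g q) = aeval (fun i => aeval f (g i)) q := by
  rw [← MvPolynomial.comp_aeval]; rfl

open MvPolynomial in
lemma negSub_negSub (q : MvPolynomial (Fin 3) ℂ) : negSub (negSub q) = q := by
  show aeval _ (aeval _ q) = q
  rw [aeval_aeval3]
  have h : (fun i => aeval (![X 0, -X 1, X 2] : Fin 3 → MvPolynomial (Fin 3) ℂ)
      ((![X 0, -X 1, X 2] : Fin 3 → MvPolynomial (Fin 3) ℂ) i))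
      = (X : Fin 3 → MvPolynomial (Fin 3) ℂ) := by
    funext i; fin_cases i <;> simp
  rw [h, aeval_X_left]; rfl

open MvPolynomial in
lemma negSub_smul (a : ℂ) (q : MvPolynomial (Fin 3) ℂ) :
    negSub (a • q) = a • negSub q := map_smul (aeval _) a q

open MvPolynomial in
lemma negSub_add (p q : MvPolynomial (Fin 3) ℂ) :
    negSub (p + q) = negSub p + negSub q := map_add (aeval _) p q

open MvPolynomial in
lemma negSub_sub (p q : MvPolynomial (Fin 3) ℂ) :
    negSub (p - q) = negSub p - negSub q := map_sub (aeval _) p q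

open MvPolynomial in
lemma negSub_mul (p q : MvPolynomial (Fin 3) ℂ) :
    negSub (p * q) = negSub p * negSub q := map_mul (aeval _) p q

open MvPolynomial in
lemma negSub_neg (p : MvPolynomial (Fin 3) ℂ) :
    negSub (-p) = -negSub p := map_neg (aeval _) p

open MvPolynomial in
lemma negSub_zero : negSub (0 : MvPolynomial (Fin 3) ℂ) = 0 := map_zero (aeval _)

open MvPolynomial in
lemma negSub_C (a : ℂ) : negSub (C a : MvPolynomial (Fin 3) ℂ) = C a := by
  simp [negSub]

open MvPolynomial in
lemma negSub_two : negSub (2 : MvPolynomial (Fin 3) ℂ) = 2 := by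
  show (aeval ![X 0, -X 1, X 2]) (2 : MvPolynomial (Fin 3) ℂ) = 2
  exact map_ofNat _ 2

open MvPolynomial in
lemma negSub_one : negSub (1 : MvPolynomial (Fin 3) ℂ) = 1 := map_one (aeval _)

open MvPolynomial in
lemma negSub_X0 : negSub (X 0 : MvPolynomial (Fin 3) ℂ) = X 0 := by simp [negSub]

open MvPolynomial in
lemma negSub_X1 : negSub (X 1 : MvPolynomial (Fin 3) ℂ) = -X 1 := by simp [negSub]

open MvPolynomial in
lemma negSub_X2 : negSub (X 2 : MvPolynomial (Fin 3) ℂ) = X 2 := by simp [negSub]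

open MvPolynomial in
lemma pderiv0_negSub (q : MvPolynomial (Fin 3) ℂ) :
    pderiv 0 (negSub q) = negSub (pderiv 0 q) := by
  induction q using MvPolynomial.induction_on with
  | C a => simp [negSub_C, negSub_zero]
  | add p q hp hq => simp only [negSub_add, map_add, hp, hq]
  | mul_X p i hp =>
      fin_cases i <;>
        simp only [negSub_mul, negSub_X0, negSub_X1, negSub_X2, negSub_neg,
          pderiv_mul, hp, negSub_add, mul_neg, neg_mul, neg_neg] <;>
        simp [negSub_X0, negSub_X1, negSub_X2, negSub_zero, negSub_one] <;> ring

open MvPolynomial in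
lemma pderiv1_negSub (q : MvPolynomial (Fin 3) ℂ) :
    pderiv 1 (negSub q) = -negSub (pderiv 1 q) := by
  induction q using MvPolynomial.induction_on with
  | C a => simp [negSub_C, negSub_zero]
  | add p q hp hq => simp only [negSub_add, map_add, hp, hq]; ring
  | mul_X p i hp =>
      fin_cases i <;>
        simp only [negSub_mul, negSub_X0, negSub_X1, negSub_X2, negSub_neg,
          pderiv_mul, hp, negSub_add, mul_neg, neg_mul, neg_neg] <;>
        simp [negSub_X0, negSub_X1, negSub_X2, negSub_zero, negSub_one] <;> ring

open MvPolynomial in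
lemma pderiv2_negSub (q : MvPolynomial (Fin 3) ℂ) :
    pderiv 2 (negSub q) = negSub (pderiv 2 q) := by
  induction q using MvPolynomial.induction_on with
  | C a => simp [negSub_C, negSub_zero]
  | add p q hp hq => simp only [negSub_add, map_add, hp, hq]
  | mul_X p i hp =>
      fin_cases i <;>
        simp only [negSub_mul, negSub_X0, negSub_X1, negSub_X2, negSub_neg,
          pderiv_mul, hp, negSub_add, mul_neg, neg_mul, neg_neg] <;>
        simp [negSub_X0, negSub_X1, negSub_X2, negSub_zero, negSub_one] <;> ring

open MvPolynomial in
lemma scaleSub_add (t : ℝ) (p q : MvPolynomial (Fin 3) ℂ) :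
    scaleSub t (p + q) = scaleSub t p + scaleSub t q := map_add (aeval _) p q

open MvPolynomial in
lemma scaleSub_mul (t : ℝ) (p q : MvPolynomial (Fin 3) ℂ) :
    scaleSub t (p * q) = scaleSub t p * scaleSub t q := map_mul (aeval _) p q

open MvPolynomial in
lemma rotSub_add (θ : ℝ) (p q : MvPolynomial (Fin 3) ℂ) :
    rotSub θ (p + q) = rotSub θ p + rotSub θ q := map_add (aeval _) p q

open MvPolynomial in
lemma rotSub_mul (θ : ℝ) (p q : MvPolynomial (Fin 3) ℂ) :
    rotSub θ (p * q) = rotSub θ p * rotSub θ q := map_mul (aeval _) p q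

open MvPolynomial in
lemma scaleSub_negSub (t : ℝ) (q : MvPolynomial (Fin 3) ℂ) :
    scaleSub t (negSub q) = negSub (scaleSub t q) := by
  induction q using MvPolynomial.induction_on with
  | C a => simp [negSub, scaleSub]
  | add p q hp hq => simp only [negSub_add, scaleSub_add, hp, hq]
  | mul_X p i hp =>
      rw [negSub_mul, scaleSub_mul, scaleSub_mul, negSub_mul, hp]
      refine congrArg _ ?_
      fin_cases i <;> simp [negSub, scaleSub] <;> ring

open MvPolynomial in
lemma scaleSub_smul (t : ℝ) (a : ℂ) (q : MvPolynomial (Fin 3) ℂ) :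
    scaleSub t (a • q) = a • scaleSub t q := map_smul (aeval _) a q

open MvPolynomial in
lemma rotSub_negSub (θ : ℝ) (q : MvPolynomial (Fin 3) ℂ) :
    rotSub θ (negSub q) = negSub (rotSub (-θ) q) := by
  induction q using MvPolynomial.induction_on with
  | C a => simp [negSub, rotSub]
  | add p q hp hq => simp only [negSub_add, rotSub_add, hp, hq]
  | mul_X p i hp =>
      rw [negSub_mul, rotSub_mul, rotSub_mul, negSub_mul, hp]
      refine congrArg _ ?_
      fin_cases i <;>
        simp [negSub, rotSub, Real.cos_neg, Real.sin_neg] <;> ring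

open MvPolynomial in
lemma rotSub_smul (θ : ℝ) (a : ℂ) (q : MvPolynomial (Fin 3) ℂ) :
    rotSub θ (a • q) = a • rotSub θ q := map_smul (aeval _) a q

lemma PhiLin_apply (N : ℕ) (ψ : ℤ → MvPolynomial (Fin 3) ℂ) (s : ℤ) :
    PhiLin N ψ s = ((-1 : ℂ) ^ s) • negSub (ψ (2 * (N : ℤ) - s)) := rfl

lemma neg_one_zpow_sub_one (s : ℤ) : ((-1 : ℂ)) ^ (s - 1) = -((-1 : ℂ)) ^ s := by
  rw [zpow_sub₀ (by norm_num : (-1 : ℂ) ≠ 0), zpow_one, div_neg, div_one]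

lemma neg_one_zpow_add_one (s : ℤ) : ((-1 : ℂ)) ^ (s + 1) = -((-1 : ℂ)) ^ s := by
  rw [zpow_add₀ (by norm_num : (-1 : ℂ) ≠ 0), zpow_one, mul_neg, mul_one]

lemma PhiLin_PhiLin (N : ℕ) (ψ : ℤ → MvPolynomial (Fin 3) ℂ) :
    PhiLin N (PhiLin N ψ) = ψ := by
  funext s
  rw [PhiLin_apply, PhiLin_apply]
  have e : 2 * (N : ℤ) - (2 * (N : ℤ) - s) = s := by ring
  rw [e, negSub_smul, negSub_negSub, smul_smul,
    ← zpow_add₀ (by norm_num : (-1 : ℂ) ≠ 0)]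
  have e2 : s + (2 * (N : ℤ) - s) = 2 * (N : ℤ) := by ring
  rw [e2, Even.neg_one_zpow ⟨(N : ℤ), by ring⟩, one_smul]

open MvPolynomial in
lemma Mop_PhiLin (lam : ℂ) (N : ℕ) (ψ : ℤ → MvPolynomial (Fin 3) ℂ) (s : ℤ) :
    Mop lam N (PhiLin N ψ) s
      = ((-1 : ℂ) ^ s) • negSub (Mop lam N ψ (2 * (N : ℤ) - s)) := by
  have e1 : 2 * (N : ℤ) - (s - 1) = (2 * (N : ℤ) - s) + 1 := by ring
  have e2 : 2 * (N : ℤ) - (s + 1) = (2 * (N : ℤ) - s) - 1 := by ring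
  simp only [Mop, PhiLin_apply, e1, e2, neg_one_zpow_sub_one, neg_one_zpow_add_one,
    neg_smul, smul_eq_C_mul, map_neg, mul_neg, neg_mul, neg_neg]
  simp only [pderiv_C_mul, pderiv0_negSub, pderiv1_negSub, pderiv2_negSub,
    map_neg, map_add, map_sub, mul_neg, neg_mul, neg_neg,
    negSub_add, negSub_sub, negSub_mul, negSub_neg, negSub_C, negSub_two,
    negSub_X0, negSub_X1, negSub_X2]
  push_cast
  simp only [map_mul, map_sub, map_add, map_neg, map_ofNat, MvPolynomial.C_1]
  ring

lemma PhiLin_mem_Sol (lam nu : ℂ) (N : ℕ) (m : ℤ) (ψ : ℤ → MvPolynomial (Fin 3) ℂ)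
    (hψ : ψ ∈ Sol lam nu N m) : PhiLin N ψ ∈ Sol lam nu N (-m) := by
  obtain ⟨h1, h2, h3, h4⟩ := hψ
  refine ⟨fun j hj => ?_, fun j hj hj' t => ?_, fun j hj hj' θ => ?_, fun s hs hs' => ?_⟩
  · rw [PhiLin_apply, h1 (2 * (N : ℤ) - j) (by omega), negSub_zero, smul_zero]
  · rw [PhiLin_apply]
    have h := h2 (2 * (N : ℤ) - j) (by omega) (by omega) t
    have h' : Complex.exp (lam * (t : ℂ)) • negSub (ψ (2 * (N : ℤ) - j))
        = Complex.exp (nu * (t : ℂ)) • negSub (scaleSub t (ψ (2 * (N : ℤ) - j))) := by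
      rw [← negSub_smul, h, negSub_smul]
    rw [smul_comm, h', smul_comm ((-1 : ℂ) ^ j), scaleSub_smul, scaleSub_negSub]
  · rw [PhiLin_apply]
    have h := h3 (2 * (N : ℤ) - j) (by omega) (by omega) (-θ)
    have ec1 : Complex.I * ((N : ℂ) - ((2 * (N : ℤ) - j : ℤ) : ℂ)) * ((-θ : ℝ) : ℂ)
        = Complex.I * ((N : ℂ) - (j : ℂ)) * (θ : ℂ) := by push_cast; ring
    have ec2 : Complex.I * ((m : ℤ) : ℂ) * ((-θ : ℝ) : ℂ)
        = Complex.I * (((-m : ℤ) : ℤ) : ℂ) * (θ : ℂ) := by push_cast; ring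
    rw [ec1, ec2] at h
    have h' : Complex.exp (Complex.I * ((N : ℂ) - (j : ℂ)) * (θ : ℂ))
          • negSub (ψ (2 * (N : ℤ) - j))
        = Complex.exp (Complex.I * (((-m : ℤ)) : ℂ) * (θ : ℂ))
          • negSub (rotSub (-θ) (ψ (2 * (N : ℤ) - j))) := by
      rw [← negSub_smul, h, negSub_smul]
    rw [smul_comm, h', smul_comm ((-1 : ℂ) ^ j), rotSub_smul, rotSub_negSub]
  · rw [Mop_PhiLin, h4 (2 * (N : ℤ) - s) (by omega) (by omega), negSub_zero, smul_zero]

/-- `Φ` restricts to a `ℂ`-linear isomorphism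
`Sol(λ,ν;N,p) ≅ Sol(λ,ν;N,-p)`. -/
theorem statement13 (lam nu : ℂ) (N : ℕ) (p : ℤ) (hp : (N : ℤ) ≤ p) :
    (∀ ψ ∈ Sol lam nu N p, PhiLin N ψ ∈ Sol lam nu N (-p)) ∧
    Submodule.map (PhiLin N) (Sol lam nu N p) = Sol lam nu N (-p) ∧
    (∀ ψ ∈ Sol lam nu N p, ∀ φ ∈ Sol lam nu N p, PhiLin N ψ = PhiLin N φ → ψ = φ) := by
  refine ⟨fun ψ h => PhiLin_mem_Sol lam nu N p ψ h, ?_, fun ψ _ φ _ h => ?_⟩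
  · ext φ
    simp only [Submodule.mem_map]
    constructor
    · rintro ⟨ψ, hψ, rfl⟩
      exact PhiLin_mem_Sol lam nu N p ψ hψ
    · intro hφ
      exact ⟨PhiLin N φ, by simpa using PhiLin_mem_Sol lam nu N (-p) φ hφ,
        PhiLin_PhiLin N φ⟩
  · have h2 := congrArg (PhiLin N) h
    rwa [PhiLin_PhiLin, PhiLin_PhiLin] at h2

end
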